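/- arXiv:1507.02345 — 7 statements merged into one kernel-verified Lean document; each statement's English description precedes it below -/
import Mathlib

section
/- Comparison Principle: Let a > 0 and let v₁, v₂ be positive continuous functions on a compact interval [y₁, y₂], twice differentiable on (y₁, y₂), such that v₁''(y) − a·v₁(y)² ≤ 0 and v₂''(y) − a·v₂(y)² ≥ 0 for all y ∈ (y₁, y₂). If v₁(y₁) ≥ v₂(y₁) and v₁(y₂) ≥ v₂(y₂), then v₁(y) ≥ v₂(y) for all y ∈ [y₁, y₂]. -/
open Set

/-- **Comparison Principle.** If `v₁` is a subsolution and `v₂` a supersolution of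
`v'' = a v²` on `(y₁, y₂)`, both positive and continuous on `[y₁, y₂]` and twice
differentiable on `(y₁, y₂)`, and `v₁ ≥ v₂` at the endpoints, then `v₁ ≥ v₂` throughout. -/
theorem comparison_principle
    (a y₁ y₂ : ℝ) (ha : 0 < a) (hy : y₁ ≤ y₂)
    (v₁ v₂ : ℝ → ℝ)
    (hc₁ : ContinuousOn v₁ (Icc y₁ y₂)) (hc₂ : ContinuousOn v₂ (Icc y₁ y₂))
    (hpos₁ : ∀ y ∈ Icc y₁ y₂, 0 < v₁ y) (hpos₂ : ∀ y ∈ Icc y₁ y₂, 0 < v₂ y)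
    (hd₁ : ∀ y ∈ Ioo y₁ y₂, DifferentiableAt ℝ v₁ y)
    (hd₁' : ∀ y ∈ Ioo y₁ y₂, DifferentiableAt ℝ (deriv v₁) y)
    (hd₂ : ∀ y ∈ Ioo y₁ y₂, DifferentiableAt ℝ v₂ y)
    (hd₂' : ∀ y ∈ Ioo y₁ y₂, DifferentiableAt ℝ (deriv v₂) y)
    (hsub : ∀ y ∈ Ioo y₁ y₂, deriv (deriv v₁) y - a * (v₁ y) ^ 2 ≤ 0)
    (hsuper : ∀ y ∈ Ioo y₁ y₂, 0 ≤ deriv (deriv v₂) y - a * (v₂ y) ^ 2)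
    (hb₁ : v₂ y₁ ≤ v₁ y₁) (hb₂ : v₂ y₂ ≤ v₁ y₂) :
    ∀ y ∈ Icc y₁ y₂, v₂ y ≤ v₁ y := by
  by_contra h
  push_neg at h
  obtain ⟨y₀, hy₀, hlt⟩ := h
  set w : ℝ → ℝ := fun y => v₂ y - v₁ y with hwdef
  have hcw : ContinuousOn w (Icc y₁ y₂) := hc₂.sub hc₁
  obtain ⟨c, hcmem, hmax⟩ := isCompact_Icc.exists_isMaxOn (nonempty_Icc.mpr hy) hcw
  have hwc : 0 < w c := lt_of_lt_of_le (by simp [hwdef]; linarith) (hmax hy₀)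
  have hc1 : y₁ < c := by
    rcases lt_or_eq_of_le hcmem.1 with h | h
    · exact h
    · exfalso; simp only [hwdef, ← h] at hwc; linarith
  have hc2 : c < y₂ := by
    rcases lt_or_eq_of_le hcmem.2 with h | h
    · exact h
    · exfalso; simp only [hwdef, h] at hwc; linarith
  have hcIoo : c ∈ Ioo y₁ y₂ := ⟨hc1, hc2⟩
  -- first derivative of w vanishes at c
  have hlocmax : IsLocalMax w c := hmax.isLocalMax (Icc_mem_nhds hc1 hc2)
  have hderw0 : deriv w c = 0 := hlocmax.deriv_eq_zero
  -- deriv w agrees with deriv v₂ - deriv v₁ on Ioo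
  have hIoo_nhds : Ioo y₁ y₂ ∈ nhds c := isOpen_Ioo.mem_nhds hcIoo
  have hderw_eq : deriv w =ᶠ[nhds c] fun y => deriv v₂ y - deriv v₁ y := by
    filter_upwards [hIoo_nhds] with y hyI
    exact deriv_sub (hd₂ y hyI) (hd₁ y hyI)
  -- second derivative of w at c
  set K : ℝ := deriv (deriv v₂) c - deriv (deriv v₁) c with hK
  have hKpos : 0 < K := by
    have h1 := hsub c hcIoo
    have h2 := hsuper c hcIoo
    have hv1 := hpos₁ c hcmem
    have hv2 := hpos₂ c hcmem
    have hlt' : v₁ c < v₂ c := by simp only [hwdef] at hwc; linarith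
    have h3 : a * v₁ c ^ 2 < a * v₂ c ^ 2 := by nlinarith [mul_pos ha (mul_pos (sub_pos.mpr hlt') (add_pos hv1 hv2))]
    simp only [hK]; linarith
  have hg : HasDerivAt (fun y => deriv v₂ y - deriv v₁ y) K c :=
    ((hd₂' c hcIoo).hasDerivAt).sub ((hd₁' c hcIoo).hasDerivAt)
  have hw'' : HasDerivAt (deriv w) K c := hg.congr_of_eventuallyEq hderw_eq
  -- slope of deriv w tends to K > 0, so deriv w > 0 just to the right of c
  have hslope : Filter.Tendsto (slope (deriv w) c) (nhdsWithin c {c}ᶜ) (nhds K) :=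
    hasDerivAt_iff_tendsto_slope.mp hw''
  have hslope' : ∀ᶠ y in nhdsWithin c (Ioi c), 0 < deriv w y := by
    have hev : ∀ᶠ y in nhdsWithin c {c}ᶜ, 0 < slope (deriv w) c y :=
      hslope.eventually (eventually_gt_nhds hKpos)
    have hsub' : nhdsWithin c (Ioi c) ≤ nhdsWithin c {c}ᶜ :=
      nhdsWithin_mono c (fun y hy => ne_of_gt hy)
    filter_upwards [hsub' hev, self_mem_nhdsWithin] with y hs hyc
    rw [slope_def_field, hderw0, sub_zero, div_pos_iff] at hs
    rcases hs with ⟨h1, h2⟩ | ⟨h1, h2⟩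
    · exact h1
    · linarith [mem_Ioi.mp hyc]
  obtain ⟨u, hu, hIocu⟩ := mem_nhdsGT_iff_exists_Ioc_subset.mp hslope'
  -- pick d with c < d ≤ y₂, deriv w > 0 on (c, d]
  set d : ℝ := min u ((c + y₂) / 2) with hd
  have hcd : c < d := lt_min (mem_Ioi.mp hu) (by linarith)
  have hdy2 : d ≤ y₂ := le_trans (min_le_right _ _) (by linarith)
  have hIccsub : Icc c d ⊆ Icc y₁ y₂ := Icc_subset_Icc hc1.le hdy2
  have hmono : StrictMonoOn w (Icc c d) := by
    apply strictMonoOn_of_deriv_pos (convex_Icc c d) (hcw.mono hIccsub)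
    intro x hx
    rw [interior_Icc] at hx
    exact hIocu ⟨hx.1, hx.2.le.trans (min_le_left _ _)⟩
  have : w c < w d := hmono ⟨le_refl c, hcd.le⟩ ⟨hcd.le, le_refl d⟩ hcd
  have : w d ≤ w c := hmax (hIccsub ⟨hcd.le, le_refl d⟩)
  linarith
end

section
/- Pinching: Let 0 < a₋ ≤ a₊, let L > 0 and η > 0, and let h : ℝ → ℝ satisfy a₋·v² ≤ h(v) ≤ a₊·v² for all v ∈ [0, η]. Suppose u, u⁺, u⁻ : [0, L] → ℝ are continuous, twice differentiable on (0, L), take values in [0, η], are positive on (0, L], and satisfy u''(y) = h(u(y)), (u⁺)''(y) = a₊·u⁺(y)², (u⁻)''(y) = a₋·u⁻(y)² on (0, L), with boundary values u(0) = u⁺(0) = u⁻(0) = 0 and u(L) = u⁺(L) = u⁻(L) = η. Then u⁺(y) ≤ u(y) ≤ u⁻(y) for all y ∈ [0, L]. -/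
open Set

/-- Key maximum-principle lemma: if `w` is continuous on `[0,L]`, vanishes at the
endpoints, and has negative second derivative wherever it is negative in the interior,
then `w` is nonnegative on `[0,L]`. -/
lemma pinching_aux (L : ℝ) (hL : 0 < L) (w : ℝ → ℝ)
    (hc : ContinuousOn w (Icc 0 L))
    (hw'' : ∀ y ∈ Ioo 0 L, w y < 0 → deriv (deriv w) y < 0)
    (h0 : w 0 = 0) (hLv : w L = 0) :
    ∀ y ∈ Icc 0 L, 0 ≤ w y := by
  by_contra hcon
  push_neg at hcon
  obtain ⟨y₀, hy₀, hneg⟩ := hcon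
  have hy₀' : y₀ ∈ Ioo 0 L := by
    rcases hy₀ with ⟨h1, h2⟩
    constructor
    · rcases lt_or_eq_of_le h1 with h | h
      · exact h
      · exfalso; rw [← h, h0] at hneg; linarith
    · rcases lt_or_eq_of_le h2 with h | h
      · exact h
      · exfalso; rw [h, hLv] at hneg; linarith
  set S₁ : Set ℝ := {y | y ∈ Icc 0 y₀ ∧ 0 ≤ w y} with hS₁
  set S₂ : Set ℝ := {y | y ∈ Icc y₀ L ∧ 0 ≤ w y} with hS₂
  have hS₁ne : S₁.Nonempty := ⟨0, ⟨le_refl 0, le_of_lt hy₀'.1⟩, by rw [h0]⟩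
  have hS₂ne : S₂.Nonempty := ⟨L, ⟨le_of_lt hy₀'.2, le_refl L⟩, by rw [hLv]⟩
  have hsub₁ : Icc 0 y₀ ⊆ Icc 0 L := Icc_subset_Icc le_rfl (le_of_lt hy₀'.2)
  have hsub₂ : Icc y₀ L ⊆ Icc 0 L := Icc_subset_Icc (le_of_lt hy₀'.1) le_rfl
  have hS₁closed : IsClosed S₁ := by
    have h1 : IsClosed (Icc 0 y₀ ∩ w ⁻¹' Ici 0) :=
      (hc.mono hsub₁).preimage_isClosed_of_isClosed isClosed_Icc isClosed_Ici
    have : S₁ = Icc 0 y₀ ∩ w ⁻¹' Ici 0 := rfl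
    rw [this]; exact h1
  have hS₂closed : IsClosed S₂ := by
    have h1 : IsClosed (Icc y₀ L ∩ w ⁻¹' Ici 0) :=
      (hc.mono hsub₂).preimage_isClosed_of_isClosed isClosed_Icc isClosed_Ici
    have : S₂ = Icc y₀ L ∩ w ⁻¹' Ici 0 := rfl
    rw [this]; exact h1
  have hbdd₁ : BddAbove S₁ := ⟨y₀, fun x hx => hx.1.2⟩
  have hbdd₂ : BddBelow S₂ := ⟨y₀, fun x hx => hx.1.1⟩
  set α := sSup S₁ with hα
  set β := sInf S₂ with hβ
  have hαmem : α ∈ S₁ := hS₁closed.csSup_mem hS₁ne hbdd₁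
  have hβmem : β ∈ S₂ := hS₂closed.csInf_mem hS₂ne hbdd₂
  have hαlt : α < y₀ := by
    rcases lt_or_eq_of_le hαmem.1.2 with h | h
    · exact h
    · exfalso; have := hαmem.2; rw [h] at this; linarith
  have hβgt : y₀ < β := by
    rcases lt_or_eq_of_le hβmem.1.1 with h | h
    · exact h
    · exfalso; have := hβmem.2; rw [← h] at this; linarith
  have hαβ : α < β := lt_trans hαlt hβgt
  have hα0 : 0 ≤ α := hαmem.1.1
  have hβL : β ≤ L := hβmem.1.2
  -- w < 0 on (α, β)
  have hwneg : ∀ x ∈ Ioo α β, w x < 0 := by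
    intro x hx
    by_contra hge
    push_neg at hge
    rcases le_or_gt x y₀ with h | h
    · have : x ∈ S₁ := ⟨⟨le_trans hα0 (le_of_lt hx.1), h⟩, hge⟩
      have := le_csSup hbdd₁ this
      linarith [hx.1]
    · have : x ∈ S₂ := ⟨⟨le_of_lt h, le_trans (le_of_lt hx.2) hβL⟩, hge⟩
      have := csInf_le hbdd₂ this
      linarith [hx.2]
  -- strict concavity on Icc α β
  have hconc : StrictConcaveOn ℝ (Icc α β) w :=
    strictConcaveOn_of_deriv2_neg (convex_Icc α β)
      (hc.mono (Icc_subset_Icc hα0 hβL))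
      (by
        intro x hx
        rw [interior_Icc] at hx
        have hx' : x ∈ Ioo 0 L := ⟨lt_of_le_of_lt hα0 hx.1, lt_of_lt_of_le hx.2 hβL⟩
        have : deriv (deriv w) x < 0 := hw'' x hx' (hwneg x hx)
        simpa [Function.iterate_succ, Function.iterate_zero] using this)
  -- derive contradiction: y₀ is a convex combination of α and β
  set t : ℝ := (β - y₀) / (β - α) with ht
  have hβα : 0 < β - α := by linarith
  have ht0 : 0 < t := div_pos (by linarith) hβα
  have ht1 : t < 1 := by
    rw [ht, div_lt_one hβα]; linarith
  have hts : t * (β - α) = β - y₀ := div_mul_cancel₀ _ (ne_of_gt hβα)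
  have hcomb : t * α + (1 - t) * β = y₀ := by linear_combination -hts
  have := hconc.2 (left_mem_Icc.2 (le_of_lt hαβ)) (right_mem_Icc.2 (le_of_lt hαβ))
    (ne_of_lt hαβ) ht0 (show (0:ℝ) < 1 - t by linarith) (show t + (1 - t) = 1 by ring)
  simp only [smul_eq_mul] at this
  rw [show t * α + (1 - t) * β = y₀ from hcomb] at this
  have h1 : (0:ℝ) ≤ t * w α := mul_nonneg (le_of_lt ht0) hαmem.2
  have h2 : (0:ℝ) ≤ (1 - t) * w β := mul_nonneg (by linarith) hβmem.2
  linarith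

/-- **Pinching.** A solution of `u'' = h(u)` with quadratically pinched forcing term
`a₋ v² ≤ h(v) ≤ a₊ v²` is trapped between the solutions of the corresponding quadratic
boundary value problems with the same boundary values. -/
theorem pinching
    (aminus aplus L η : ℝ) (h : ℝ → ℝ)
    (ha₀ : 0 < aminus) (ha : aminus ≤ aplus) (hL : 0 < L) (hη : 0 < η)
    (hh : ∀ v ∈ Icc (0:ℝ) η, aminus * v ^ 2 ≤ h v ∧ h v ≤ aplus * v ^ 2)
    (u up um : ℝ → ℝ)
    (hcu : ContinuousOn u (Icc 0 L))
    (hcup : ContinuousOn up (Icc 0 L))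
    (hcum : ContinuousOn um (Icc 0 L))
    (hdu : ∀ y ∈ Ioo 0 L, DifferentiableAt ℝ u y)
    (hdu' : ∀ y ∈ Ioo 0 L, DifferentiableAt ℝ (deriv u) y)
    (hdup : ∀ y ∈ Ioo 0 L, DifferentiableAt ℝ up y)
    (hdup' : ∀ y ∈ Ioo 0 L, DifferentiableAt ℝ (deriv up) y)
    (hdum : ∀ y ∈ Ioo 0 L, DifferentiableAt ℝ um y)
    (hdum' : ∀ y ∈ Ioo 0 L, DifferentiableAt ℝ (deriv um) y)
    (hrange_u : ∀ y ∈ Icc 0 L, u y ∈ Icc (0:ℝ) η)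
    (hrange_up : ∀ y ∈ Icc 0 L, up y ∈ Icc (0:ℝ) η)
    (hrange_um : ∀ y ∈ Icc 0 L, um y ∈ Icc (0:ℝ) η)
    (hpos_u : ∀ y ∈ Ioc 0 L, 0 < u y)
    (hpos_up : ∀ y ∈ Ioc 0 L, 0 < up y)
    (hpos_um : ∀ y ∈ Ioc 0 L, 0 < um y)
    (hode_u : ∀ y ∈ Ioo 0 L, deriv (deriv u) y = h (u y))
    (hode_up : ∀ y ∈ Ioo 0 L, deriv (deriv up) y = aplus * (up y) ^ 2)
    (hode_um : ∀ y ∈ Ioo 0 L, deriv (deriv um) y = aminus * (um y) ^ 2)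
    (hb0 : u 0 = 0) (hbp0 : up 0 = 0) (hbm0 : um 0 = 0)
    (hbL : u L = η) (hbpL : up L = η) (hbmL : um L = η) :
    ∀ y ∈ Icc 0 L, up y ≤ u y ∧ u y ≤ um y := by
  have hopen : IsOpen (Ioo (0:ℝ) L) := isOpen_Ioo
  -- deriv of a difference, eventually
  have deriv2_sub : ∀ (f g : ℝ → ℝ),
      (∀ y ∈ Ioo 0 L, DifferentiableAt ℝ f y) →
      (∀ y ∈ Ioo 0 L, DifferentiableAt ℝ g y) →
      (∀ y ∈ Ioo 0 L, DifferentiableAt ℝ (deriv f) y) →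
      (∀ y ∈ Ioo 0 L, DifferentiableAt ℝ (deriv g) y) →
      ∀ y ∈ Ioo 0 L,
        deriv (deriv (fun z => f z - g z)) y = deriv (deriv f) y - deriv (deriv g) y := by
    intro f g hf hg hf' hg' y hy
    have hev : (fun z => deriv (fun z => f z - g z) z) =ᶠ[nhds y]
        (fun z => deriv f z - deriv g z) := by
      filter_upwards [hopen.mem_nhds hy] with z hz
      exact deriv_sub (hf z hz) (hg z hz)
    rw [hev.deriv_eq]
    exact deriv_sub (hf' y hy) (hg' y hy)
  intro y hy
  constructor
  · -- up ≤ u : apply aux to w = u - up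
    have key := pinching_aux L hL (fun z => u z - up z)
      (hcu.sub hcup)
      (by
        intro z hz hwz
        rw [deriv2_sub u up hdu hdup hdu' hdup' z hz, hode_u z hz, hode_up z hz]
        have hz' : z ∈ Icc 0 L := ⟨le_of_lt hz.1, le_of_lt hz.2⟩
        have hu := hrange_u z hz'
        have hupub := (hh (u z) hu).2
        have hupos := hpos_up z ⟨hz.1, le_of_lt hz.2⟩
        have hwz' : u z - up z < 0 := hwz
        have hlt : u z < up z := by linarith
        nlinarith [mul_pos (mul_pos (show (0:ℝ) < aplus by linarith)
          (show (0:ℝ) < up z - u z by linarith))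
          (show (0:ℝ) < up z + u z by linarith [hu.1])])
      (by simp [hb0, hbp0]) (by simp [hbL, hbpL])
    have := key y hy
    simp only [sub_nonneg] at this
    linarith
  · -- u ≤ um : apply aux to w = um - u
    have key := pinching_aux L hL (fun z => um z - u z)
      (hcum.sub hcu)
      (by
        intro z hz hwz
        rw [deriv2_sub um u hdum hdu hdum' hdu' z hz, hode_um z hz, hode_u z hz]
        have hz' : z ∈ Icc 0 L := ⟨le_of_lt hz.1, le_of_lt hz.2⟩
        have hu := hrange_u z hz'
        have hum := hrange_um z hz'
        have hulb := (hh (u z) hu).1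
        have hupos := hpos_u z ⟨hz.1, le_of_lt hz.2⟩
        have hwz' : um z - u z < 0 := hwz
        have hlt : um z < u z := by linarith
        nlinarith [mul_pos (mul_pos ha₀
          (show (0:ℝ) < u z - um z by linarith))
          (show (0:ℝ) < u z + um z by linarith [hum.1])])
      (by simp [hb0, hbm0]) (by simp [hbL, hbmL])
    have := key y hy
    simp only [sub_nonneg] at this
    linarith
end

section
/- Let x > 0 and let u : [0, x] → ℝ be a twice continuously differentiable, nondecreasing function satisfying u''(y) = u(y)² for all y ∈ (0, x), with u(0) = 0 and u(x) = 1. Then u'(y) > 0 for all y ∈ [0, x]. -/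
/-!
Since `u'' = u² ≥ 0`, the derivative `u'` is nondecreasing, so it suffices to show `u'(0) > 0`,
and `u' ≥ 0` because `u` is monotone. If `u'(0) = 0`, then `h = u + u'` satisfies
`h' = u' + u² ≤ h` (as `0 ≤ u ≤ 1`) and `h(0) = 0`, so by Grönwall `h(x) ≤ 0`,
contradicting `h(x) ≥ u(x) = 1`.
-/

open Set Real

theorem le_exp_mul_of_hasDerivAt_le_self {f f' : ℝ → ℝ} {a b : ℝ} (hab : a ≤ b)
    (hf : ContinuousOn f (Icc a b)) (hf' : ∀ y ∈ Ioo a b, HasDerivAt f (f' y) y)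
    (hle : ∀ y ∈ Ioo a b, f' y ≤ f y) : f b ≤ exp (b - a) * f a := by
  have hanti : AntitoneOn (fun y => exp (-y) * f y) (Icc a b) := by
    refine antitoneOn_of_hasDerivWithinAt_nonpos (convex_Icc a b)
      (f' := fun y => exp (-y) * (f' y - f y)) (by fun_prop) ?_ ?_ <;> rw [interior_Icc]
    · intro y hy
      exact ((hasDerivAt_neg y).exp.mul (hf' y hy)).hasDerivWithinAt.congr_deriv (by ring)
    · exact fun y hy => mul_nonpos_of_nonneg_of_nonpos (exp_pos _).le (sub_nonpos.2 (hle y hy))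
  calc f b = exp b * (exp (-b) * f b) := by rw [← mul_assoc, ← exp_add]; simp
    _ ≤ exp b * (exp (-a) * f a) :=
      mul_le_mul_of_nonneg_left (hanti (left_mem_Icc.2 hab) (right_mem_Icc.2 hab) hab)
        (exp_pos b).le
    _ = exp (b - a) * f a := by rw [← mul_assoc, ← exp_add, sub_eq_add_neg]

theorem deriv_pos_of_bvp_general
    (x : ℝ) (hx : 0 < x) (u u' u'' : ℝ → ℝ)
    (hu' : ∀ y ∈ Icc 0 x, HasDerivWithinAt u (u' y) (Icc 0 x) y)
    (hu'' : ∀ y ∈ Icc 0 x, HasDerivWithinAt u' (u'' y) (Icc 0 x) y)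
    (hmono : MonotoneOn u (Icc 0 x))
    (hode : ∀ y ∈ Ioo 0 x, u'' y = (u y) ^ 2)
    (h0 : u 0 = 0) (hx1 : u x = 1) :
    ∀ y ∈ Icc 0 x, 0 < u' y := by
  have h0x : (0 : ℝ) ∈ Icc 0 x := left_mem_Icc.2 hx.le
  have hx0 : x ∈ Icc 0 x := right_mem_Icc.2 hx.le
  have hu'_nonneg : ∀ y ∈ Icc 0 x, 0 ≤ u' y := fun y hy => by
    simpa [(hu' y hy).derivWithin (uniqueDiffOn_Icc hx y hy)] using
      hmono.derivWithin_nonneg (x := y)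
  have hu'_mono : MonotoneOn u' (Icc 0 x) := by
    refine monotoneOn_of_hasDerivWithinAt_nonneg (convex_Icc 0 x) (f' := u'')
      (fun y hy => (hu'' y hy).continuousWithinAt) ?_ ?_ <;> rw [interior_Icc]
    · exact fun y hy => (hu'' y (Ioo_subset_Icc_self hy)).mono Ioo_subset_Icc_self
    · exact fun y hy => hode y hy ▸ sq_nonneg _
  intro y hy
  suffices 0 < u' 0 from this.trans_le (hu'_mono h0x hy hy.1)
  refine (hu'_nonneg 0 h0x).lt_of_ne' fun hzero => ?_
  have hgrowth : u x + u' x ≤ exp (x - 0) * (u 0 + u' 0) := by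
    refine le_exp_mul_of_hasDerivAt_le_self (f := u + u') (f' := u' + u'') hx.le
      (fun y hy => ((hu' y hy).add (hu'' y hy)).continuousWithinAt)
      (fun y hy => ((hu' y (Ioo_subset_Icc_self hy)).add
        (hu'' y (Ioo_subset_Icc_self hy))).hasDerivAt (Icc_mem_nhds hy.1 hy.2)) ?_
    intro y hy
    have hy' := Ioo_subset_Icc_self hy
    have hsq : u y ^ 2 ≤ u y := sq_le (h0 ▸ hmono h0x hy' hy'.1) (hx1 ▸ hmono hy' hx0 hy'.2)
    simp only [Pi.add_apply, hode y hy]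
    linarith
  rw [h0, hzero, hx1] at hgrowth
  linarith [hu'_nonneg x hx0]

/-- A nondecreasing, twice continuously differentiable solution of the boundary value
problem `u'' = u²` on `[0,x]` with `u(0) = 0`, `u(x) = 1` has strictly positive
derivative on all of `[0, x]`. -/
theorem deriv_pos_of_bvp
    (x : ℝ) (hx : 0 < x) (u u' u'' : ℝ → ℝ)
    (hu' : ∀ y ∈ Icc 0 x, HasDerivWithinAt u (u' y) (Icc 0 x) y)
    (hu'' : ∀ y ∈ Icc 0 x, HasDerivWithinAt u' (u'' y) (Icc 0 x) y)
    (hcont : ContinuousOn u'' (Icc 0 x))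
    (hmono : MonotoneOn u (Icc 0 x))
    (hode : ∀ y ∈ Ioo 0 x, u'' y = (u y) ^ 2)
    (h0 : u 0 = 0) (hx1 : u x = 1) :
    ∀ y ∈ Icc 0 x, 0 < u' y :=
  deriv_pos_of_bvp_general x hx u u' u'' hu' hu'' hmono hode h0 hx1
end

section
/- For each x > 0 let ω_x > 0 be the positive real number such that, with Λ_ω = {m·(ω/√3)·e^{iπ/6} + n·(ω/√3)·e^{iπ/2} : m, n ∈ ℤ}, the function u_x(y) = 6·℘_{Λ_{ω_x}}(y + 2ω_x/3) is the strictly increasing solution of the boundary value problem u'' = u², u(0) = 0, u(x) = 1 on [0, x]. Then lim_{x→∞} ω_x / x = 3. -/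
open Set Filter

/-- The Weierstrass ℘-function of the lattice `Λ`. -/
noncomputable def wp (Λ : Set ℂ) (z : ℂ) : ℂ :=
  1 / z ^ 2 + ∑' l : {l : ℂ // l ∈ Λ ∧ l ≠ 0}, (1 / (z - (l : ℂ)) ^ 2 - 1 / (l : ℂ) ^ 2)

/-- The lattice `Λ_ω` generated by `(ω/√3) e^{iπ/6}` and `(ω/√3) e^{iπ/2}`. -/
noncomputable def Lomega (ω : ℝ) : Set ℂ :=
  {z : ℂ | ∃ m n : ℤ,
    z = (m : ℂ) * (((ω / Real.sqrt 3 : ℝ) : ℂ) * Complex.exp ((Real.pi : ℂ) * Complex.I / 6)) +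
        (n : ℂ) * (((ω / Real.sqrt 3 : ℝ) : ℂ) * Complex.exp ((Real.pi : ℂ) * Complex.I / 2))}

/-!
Rescaling gives `℘_{Λ_ω}(ω τ) = ω⁻² ℘_{Λ_1}(τ)`, so `u_x(y) = 6 ω_x⁻² ℘_{Λ_1}(y / ω_x + 2/3)`.
The lattice `Λ_1` meets `ℝ` exactly in `ℤ`, so on `[1/2, 3/2]` the function `℘_{Λ_1}` differs
from its double pole `1 / (t - 1)²` by a bounded amount. As `u_x` is bounded on `[0, x]`, the
pole `t = 1` lies beyond `t = x / ω_x + 2/3`, i.e. `3x < ω_x`; and `u_x(x) = 1` then reads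
`ω_x² / 6 = 1 / (x / ω_x - 1/3)² + O(1)`, which bounds `ω_x / 3 - x`.
-/

open PeriodPair
open scoped Pointwise Topology

noncomputable def hexPeriods : PeriodPair where
  ω₁ := ⟨1 / 2, 1 / (2 * Real.sqrt 3)⟩
  ω₂ := ⟨0, 1 / Real.sqrt 3⟩
  indep := by
    refine LinearIndependent.pair_iff.mpr fun s t h => ?_
    obtain rfl : s = 0 := by simpa using congrArg Complex.re h
    exact ⟨rfl, by simpa using congrArg Complex.im h⟩

lemma exp_pi_mul_I_div_six :
    Complex.exp ((Real.pi : ℂ) * Complex.I / 6) = ⟨Real.sqrt 3 / 2, 1 / 2⟩ := by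
  apply Complex.ext <;> simp [Complex.exp_re, Complex.exp_im, mul_div_assoc, ← div_eq_mul_inv]

lemma Lomega_eq_smul (ω : ℝ) : Lomega ω = (ω : ℂ) • (hexPeriods.lattice : Set ℂ) := by
  have h3 : Real.sqrt 3 ≠ 0 := by positivity
  have hω₁ : ((ω / Real.sqrt 3 : ℝ) : ℂ) * Complex.exp ((Real.pi : ℂ) * Complex.I / 6) =
      ω * hexPeriods.ω₁ := by
    rw [exp_pi_mul_I_div_six]
    apply Complex.ext <;>
      simp only [hexPeriods, Complex.mul_re, Complex.mul_im, Complex.ofReal_re,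
        Complex.ofReal_im] <;> field_simp <;> ring
  have hω₂ : ((ω / Real.sqrt 3 : ℝ) : ℂ) * Complex.exp ((Real.pi : ℂ) * Complex.I / 2) =
      ω * hexPeriods.ω₂ := by
    rw [show (Real.pi : ℂ) * Complex.I / 2 = Real.pi / 2 * Complex.I by ring,
      Complex.exp_pi_div_two_mul_I]
    apply Complex.ext <;>
      simp only [hexPeriods, Complex.mul_re, Complex.mul_im, Complex.ofReal_re,
        Complex.ofReal_im, Complex.I_re, Complex.I_im] <;> ring
  ext z
  simp only [Lomega, hω₁, hω₂, Set.mem_smul_set, SetLike.mem_coe, mem_lattice]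
  constructor
  · rintro ⟨m, n, rfl⟩
    exact ⟨_, ⟨m, n, rfl⟩, by simp only [smul_eq_mul]; ring⟩
  · rintro ⟨_, ⟨m, n, rfl⟩, rfl⟩
    exact ⟨m, n, by simp only [smul_eq_mul]; ring⟩

lemma exists_intCast_of_ofReal_mem_hexPeriods_lattice {t : ℝ}
    (ht : (t : ℂ) ∈ hexPeriods.lattice) : ∃ n : ℤ, t = n := by
  obtain ⟨m, n, h⟩ := mem_lattice.mp ht
  have hre : (m : ℝ) / 2 = t := by
    simpa [hexPeriods, div_eq_mul_inv] using congrArg Complex.re h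
  have him : ((m : ℝ) + 2 * n) / (2 * Real.sqrt 3) = 0 := by
    rw [← Complex.ofReal_im t, ← h]
    simp only [hexPeriods, Complex.add_im, Complex.mul_im, Complex.intCast_re, Complex.intCast_im]
    ring
  have hm : m = -2 * n := by
    have : (m : ℝ) + 2 * n = 0 := by simpa using him
    exact_mod_cast (by linarith : (m : ℝ) = -2 * n)
  exact ⟨-n, by rw [← hre, hm]; push_cast; ring⟩

lemma one_mem_hexPeriods_lattice : (1 : ℂ) ∈ hexPeriods.lattice :=
  mem_lattice.mpr ⟨2, -1, by norm_num [Complex.ext_iff, hexPeriods]; ring⟩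

lemma wp_smul (Λ : Set ℂ) {c : ℂ} (hc : c ≠ 0) (z : ℂ) :
    wp (c • Λ) (c * z) = (c ^ 2)⁻¹ * wp Λ z := by
  let e : {l : ℂ // l ∈ Λ ∧ l ≠ 0} ≃ {l : ℂ // l ∈ c • Λ ∧ l ≠ 0} :=
    (Equiv.mulLeft₀ c hc).subtypeEquiv fun l => by
      simp [Equiv.mulLeft₀_apply, ← smul_eq_mul, Set.smul_mem_smul_set_iff₀ hc, hc]
  unfold wp
  rw [← e.tsum_eq, mul_add, ← tsum_mul_left]
  congr 1
  · field_simp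
  · refine tsum_congr fun l => ?_
    change 1 / (c * z - c * l) ^ 2 - 1 / (c * l) ^ 2 = _
    rw [← mul_sub]
    field_simp

-- Mathlib's `℘[L]` sums over all of `L.lattice`; its `l = 0` term is `1 / z ^ 2` since `1 / 0 = 0`.
lemma wp_coe_lattice (L : PeriodPair) (z : ℂ) : wp L.lattice z = ℘[L] z := by
  have h : ℘[L] z = 1 / z ^ 2 + L.weierstrassPExcept 0 z := by
    have h₀ := L.weierstrassPExcept_def 0 z
    rw [ZeroMemClass.coe_zero, zero_pow two_ne_zero, div_zero, sub_zero] at h₀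
    linear_combination -h₀
  rw [h, wp, PeriodPair.weierstrassPExcept]
  congr 1
  change _ = ∑' l : (L.lattice : Set ℂ), _
  refine (tsum_subtype {l : ℂ | l ∈ (L.lattice : Set ℂ) ∧ l ≠ 0}
    (fun l => 1 / (z - l) ^ 2 - 1 / l ^ 2)).trans
    (Eq.trans ?_ (tsum_subtype (L.lattice : Set ℂ)
      (fun l => if l = 0 then 0 else 1 / (z - l) ^ 2 - 1 / l ^ 2)).symm)
  congr 1 with l
  simp only [Set.indicator]
  split_ifs <;> simp_all

lemma wp_Lomega {ω : ℝ} (hω : ω ≠ 0) (y : ℝ) :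
    wp (Lomega ω) ((y : ℂ) + 2 * (ω : ℂ) / 3) =
      ((ω : ℂ) ^ 2)⁻¹ * ℘[hexPeriods] ((y / ω + 2 / 3 : ℝ) : ℂ) := by
  have hωc : (ω : ℂ) ≠ 0 := by exact_mod_cast hω
  have harg : (y : ℂ) + 2 * (ω : ℂ) / 3 = ω * ((y / ω + 2 / 3 : ℝ) : ℂ) := by
    push_cast
    field_simp
  rw [harg, Lomega_eq_smul, wp_smul _ hωc, wp_coe_lattice]

lemma PeriodPair.exists_bound_weierstrassP_sub_sq_inv (L : PeriodPair) (l₀ : L.lattice)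
    {K : Set ℂ} (hK : IsCompact K) (hKL : ∀ z ∈ K, z ∈ L.lattice → z = l₀) :
    ∃ M, ∀ z ∈ K, ‖℘[L] z - 1 / (z - l₀) ^ 2‖ ≤ M := by
  refine hK.exists_bound_of_continuousOn (ContinuousOn.congr (f := fun z =>
    L.weierstrassPExcept l₀ z - 1 / (l₀ : ℂ) ^ 2) ?_ fun z _ => ?_)
  · refine ((L.differentiableOn_weierstrassPExcept l₀).continuousOn.mono fun z hz hzL => ?_).sub
      continuousOn_const
    exact hzL.2 (hKL z hz hzL.1)
  · dsimp only
    rw [L.weierstrassPExcept_def]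
    ring

lemma exists_bound_hexPeriods_weierstrassP_sub_sq_inv :
    ∃ M, ∀ t ∈ Icc (1 / 2 : ℝ) (3 / 2), ‖℘[hexPeriods] t - 1 / ((t : ℂ) - 1) ^ 2‖ ≤ M := by
  have hK : ∀ z ∈ (↑) '' Icc (1 / 2 : ℝ) (3 / 2), z ∈ hexPeriods.lattice → z = 1 := by
    rintro _ ⟨t, ⟨ht₁, ht₂⟩, rfl⟩ htL
    obtain ⟨n, rfl⟩ := exists_intCast_of_ofReal_mem_hexPeriods_lattice htL
    have hn₀ : (0 : ℝ) < n := by linarith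
    have hn₂ : (n : ℝ) < 2 := by linarith
    obtain rfl : n = 1 := by
      have := Int.cast_pos.mp hn₀
      have : n < 2 := by exact_mod_cast hn₂
      omega
    simp
  obtain ⟨M, hM⟩ := hexPeriods.exists_bound_weierstrassP_sub_sq_inv
    ⟨1, one_mem_hexPeriods_lattice⟩ (isCompact_Icc.image Complex.continuous_ofReal) hK
  exact ⟨M, fun t ht => hM t (mem_image_of_mem _ ht)⟩

section DoublePole

variable {P : ℝ → ℂ} {M : ℝ}

lemma exists_lt_norm_of_sub_sq_inv_le
    (hP : ∀ t ∈ Icc (1 / 2 : ℝ) (3 / 2), ‖P t - 1 / ((t : ℂ) - 1) ^ 2‖ ≤ M) (B : ℝ) :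
    ∃ t ∈ Ico (2 / 3 : ℝ) 1, B < ‖P t‖ := by
  set K := |B| + |M| + 3 with hK
  have hK3 : 3 ≤ K := by linarith [abs_nonneg B, abs_nonneg M]
  have hKinv : K⁻¹ ≤ 1 / 3 := by rw [one_div]; exact inv_anti₀ (by norm_num) hK3
  have hKinv₀ : 0 < K⁻¹ := by positivity
  refine ⟨1 - K⁻¹, ⟨by linarith, by linarith⟩, ?_⟩
  have hpole : ‖1 / (((1 - K⁻¹ : ℝ) : ℂ) - 1) ^ 2‖ = K ^ 2 := by
    rw [show ((1 - K⁻¹ : ℝ) : ℂ) - 1 = ((-K⁻¹ : ℝ) : ℂ) by push_cast; ring]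
    rw [norm_div, norm_one, norm_pow, Complex.norm_real, Real.norm_eq_abs, abs_neg,
      abs_of_pos hKinv₀, inv_pow, one_div, inv_inv]
  have := norm_sub_norm_le (1 / (((1 - K⁻¹ : ℝ) : ℂ) - 1) ^ 2) (P (1 - K⁻¹))
  rw [norm_sub_rev, hpole] at this
  have := hP (1 - K⁻¹) ⟨by linarith, by linarith⟩
  nlinarith [le_abs_self B, le_abs_self M]

lemma three_mul_lt_of_continuousOn
    (hP : ∀ t ∈ Icc (1 / 2 : ℝ) (3 / 2), ‖P t - 1 / ((t : ℂ) - 1) ^ 2‖ ≤ M)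
    {x w : ℝ} {c : ℂ} (hw : 0 < w) (hc : c ≠ 0) {f : ℝ → ℝ} (hf : ContinuousOn f (Icc 0 x))
    (hfP : ∀ y ∈ Icc 0 x, (f y : ℂ) = c * P (y / w + 2 / 3)) :
    3 * x < w := by
  by_contra! hwx
  obtain ⟨B, hB⟩ := isCompact_Icc.exists_bound_of_continuousOn hf
  obtain ⟨t, ⟨ht₁, ht₂⟩, hPt⟩ := exists_lt_norm_of_sub_sq_inv_le hP (B / ‖c‖)
  have hy : w * (t - 2 / 3) ∈ Icc 0 x := ⟨by nlinarith, by nlinarith⟩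
  have hft := hfP _ hy
  rw [show w * (t - 2 / 3) / w + 2 / 3 = t by field_simp; ring] at hft
  have hnorm : ‖f (w * (t - 2 / 3))‖ = ‖c‖ * ‖P t‖ := by
    rw [← norm_mul, ← hft, Complex.norm_real]
  have := hB _ hy
  rw [div_lt_iff₀' (norm_pos_iff.mpr hc)] at hPt
  linarith

lemma sq_sub_one_mul_le_two_of_eq
    (hP : ∀ t ∈ Icc (1 / 2 : ℝ) (3 / 2), ‖P t - 1 / ((t : ℂ) - 1) ^ 2‖ ≤ M)
    {t c : ℝ} (ht : t ∈ Icc (1 / 2 : ℝ) (3 / 2)) (hPt : P t = c) (hc : 2 * M ≤ c) :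
    (t - 1) ^ 2 * c ≤ 2 := by
  rcases eq_or_ne t 1 with rfl | ht₁
  · simp
  have hs : 0 < (t - 1) ^ 2 := by positivity
  have h := hP t ht
  rw [hPt, show (c : ℂ) - 1 / ((t : ℂ) - 1) ^ 2 = ((c - 1 / (t - 1) ^ 2 : ℝ) : ℂ) by
    push_cast; ring, Complex.norm_real, Real.norm_eq_abs] at h
  have h' : c / 2 ≤ 1 / (t - 1) ^ 2 := by linarith [(abs_le.mp h).2]
  rw [le_div_iff₀ hs] at h'
  linarith

end DoublePole

lemma tendsto_div_self_of_le_of_le {f : ℝ → ℝ} {c C : ℝ}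
    (h : ∀ᶠ x in atTop, c * x ≤ f x ∧ f x ≤ c * x + C) :
    Tendsto (fun x => f x / x) atTop (𝓝 c) := by
  have hupper : Tendsto (fun x : ℝ => c + C / x) atTop (𝓝 c) := by
    simpa using (tendsto_const_nhds (x := c)).add
      ((tendsto_const_nhds (x := C)).div_atTop tendsto_id)
  refine tendsto_of_tendsto_of_tendsto_of_le_of_le' tendsto_const_nhds hupper ?_ ?_
    <;> filter_upwards [h, eventually_gt_atTop 0] with x hx hx₀
  · rw [le_div_iff₀ hx₀]
    exact hx.1
  · rw [div_le_iff₀ hx₀, add_mul, div_mul_cancel₀ _ hx₀.ne']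
    exact hx.2

/-- If for each `x > 0`, `u x (y) = 6 ℘_{Λ_{ω_x}}(y + 2ω_x/3)` is the strictly increasing
solution of `u'' = u²`, `u(0) = 0`, `u(x) = 1` on `[0, x]` with `ω x > 0`, then
`ω_x / x → 3` as `x → ∞`. -/
theorem period_asymptotics
    (ω : ℝ → ℝ) (u : ℝ → ℝ → ℝ)
    (hyp : ∀ x : ℝ, 0 < x →
      0 < ω x ∧
      ContinuousOn (u x) (Icc 0 x) ∧
      StrictMonoOn (u x) (Icc 0 x) ∧
      (∀ y ∈ Ioo 0 x, deriv (deriv (u x)) y = (u x y) ^ 2) ∧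
      u x 0 = 0 ∧ u x x = 1 ∧
      (∀ y ∈ Icc 0 x, ((u x y : ℂ)) =
        6 * wp (Lomega (ω x)) ((y : ℂ) + 2 * ((ω x : ℝ) : ℂ) / 3))) :
    Tendsto (fun x : ℝ => ω x / x) atTop (nhds 3) := by
  obtain ⟨M, hM⟩ := exists_bound_hexPeriods_weierstrassP_sub_sq_inv
  have hlarge : ∀ᶠ x : ℝ in atTop, 12 * M ≤ (3 * x) ^ 2 :=
    ((tendsto_pow_atTop two_ne_zero).comp
      (tendsto_id.const_mul_atTop three_pos)).eventually_ge_atTop _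
  refine tendsto_div_self_of_le_of_le (C := 12) ?_
  filter_upwards [eventually_gt_atTop 0, hlarge] with x hx hxM
  obtain ⟨hω, hcont, -, -, -, hux, hwp⟩ := hyp x hx
  have hωc : ((ω x : ℝ) : ℂ) ≠ 0 := by exact_mod_cast hω.ne'
  have hu : ∀ y ∈ Icc 0 x, (u x y : ℂ) =
      6 * ((ω x : ℂ) ^ 2)⁻¹ * ℘[hexPeriods] ((y / ω x + 2 / 3 : ℝ) : ℂ) := fun y hy => by
    rw [hwp y hy, wp_Lomega hω.ne', mul_assoc]
  have hlower := three_mul_lt_of_continuousOn hM hω (by simpa using hωc) hcont hu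
  refine ⟨hlower.le, ?_⟩
  have ht : x / ω x + 2 / 3 ∈ Icc (1 / 2 : ℝ) (3 / 2) := by
    have : x / ω x < 1 / 3 := by rw [div_lt_iff₀ hω]; linarith
    exact ⟨by linarith [div_pos hx hω], by linarith⟩
  have hP : ℘[hexPeriods] ((x / ω x + 2 / 3 : ℝ) : ℂ) = ((ω x ^ 2 / 6 : ℝ) : ℂ) := by
    have := hu x ⟨hx.le, le_rfl⟩
    rw [hux] at this
    generalize ℘[hexPeriods] _ = p at this ⊢
    push_cast at this ⊢
    field_simp at this ⊢
    linear_combination -this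
  have := sq_sub_one_mul_le_two_of_eq hM ht hP (by nlinarith)
  rw [show (x / ω x + 2 / 3 - 1) ^ 2 * (ω x ^ 2 / 6) = (x - ω x / 3) ^ 2 / 6 by
    field_simp; ring] at this
  nlinarith
end

section
/- Fix s ∈ (0, 1) and define u : [0, ∞) → ℝ by u(y) = 6s/(y·√s + √6)². Then u is twice continuously differentiable, satisfies the differential equation u''(y) = u(y)² for all y > 0, has boundary value u(0) = s, and satisfies lim_{y→∞} u(y) = 0. -/
/-! With `a = √s` the function is `u y = 6 a² / (y a + b)²`, and two applications of
`d/dy c / (y a + b)ⁿ = -n c a / (y a + b)ⁿ⁺¹` give `u'' = 36 a⁴ / (y a + b)⁴ = u²`. -/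

open Set Filter Topology

section AffinePower

variable (c a b : ℝ) (n : ℕ)

theorem hasDerivAt_div_affine_pow {y : ℝ} (hy : y * a + b ≠ 0) :
    HasDerivAt (fun y => c / (y * a + b) ^ n) (-(n * c * a) / (y * a + b) ^ (n + 1)) y := by
  have hlin : HasDerivAt (fun y => y * a + b) a y := by
    simpa using ((hasDerivAt_id y).mul_const a).add_const b
  refine ((hasDerivAt_const y c).fun_div (hlin.fun_pow n) (pow_ne_zero n hy)).congr_deriv ?_
  rcases n with _ | k
  · simp
  · field_simp
    simp only [Nat.add_sub_cancel]
    ring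

theorem deriv_div_affine_pow_eventuallyEq {y : ℝ} (hy : y * a + b ≠ 0) :
    deriv (fun y => c / (y * a + b) ^ n) =ᶠ[𝓝 y] fun y => -(n * c * a) / (y * a + b) ^ (n + 1) := by
  have hopen : IsOpen {y : ℝ | y * a + b ≠ 0} := isOpen_ne_fun (by fun_prop) (by fun_prop)
  filter_upwards [hopen.mem_nhds hy] with z hz using (hasDerivAt_div_affine_pow c a b n hz).deriv

theorem contDiffOn_div_affine_pow {k : WithTop ℕ∞} {S : Set ℝ} (hS : ∀ y ∈ S, y * a + b ≠ 0) :
    ContDiffOn ℝ k (fun y => c / (y * a + b) ^ n) S :=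
  contDiffOn_const.div (by fun_prop) fun y hy => pow_ne_zero n (hS y hy)

theorem tendsto_div_affine_pow_atTop (ha : 0 < a) (hn : n ≠ 0) :
    Tendsto (fun y => c / (y * a + b) ^ n) atTop (𝓝 0) := by
  have h : Tendsto (fun y => y * a + b) atTop atTop :=
    tendsto_atTop_add_const_right _ b (tendsto_id.atTop_mul_const ha)
  simpa using tendsto_const_nhds.div_atTop ((tendsto_pow_atTop hn).comp h)

theorem deriv_deriv_inverse_square {y : ℝ} (hy : y * a + b ≠ 0) :
    deriv (deriv fun y => 6 * a ^ 2 / (y * a + b) ^ 2) y = (6 * a ^ 2 / (y * a + b) ^ 2) ^ 2 := by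
  rw [(deriv_div_affine_pow_eventuallyEq _ a b 2 hy).deriv_eq]
  convert (hasDerivAt_div_affine_pow _ a b 3 hy).deriv using 1
  field_simp
  ring

end AffinePower

/-- The explicit formula `u(y) = 6s/(y√s + √6)²` solves the boundary value problem
`u'' = u²`, `u(0) = s`, `u(∞) = 0`, and is twice continuously differentiable on `[0, ∞)`. -/
theorem pgf_complement_formula
    (s : ℝ) (hs : s ∈ Ioo (0:ℝ) 1)
    (u : ℝ → ℝ)
    (hu : ∀ y : ℝ, u y = 6 * s / (y * Real.sqrt s + Real.sqrt 6) ^ 2) :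
    ContDiffOn ℝ 2 u (Ici 0) ∧
    (∀ y : ℝ, 0 < y → deriv (deriv u) y = (u y) ^ 2) ∧
    u 0 = s ∧
    Tendsto u atTop (nhds 0) := by
  obtain rfl : u = fun y => 6 * √s ^ 2 / (y * √s + √6) ^ 2 := by
    funext y; rw [hu, Real.sq_sqrt hs.1.le]
  have hpos : ∀ y ∈ Ici (0:ℝ), y * √s + √6 ≠ 0 := fun y (hy : 0 ≤ y) => by positivity
  refine ⟨contDiffOn_div_affine_pow _ _ _ _ hpos,
    fun y hy => deriv_deriv_inverse_square _ _ (hpos y hy.le), ?_,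
    tendsto_div_affine_pow_atTop _ _ _ _ (Real.sqrt_pos.2 hs.1) two_ne_zero⟩
  simp [Real.sq_sqrt hs.1.le]
end

section
/- Let A : [0, 1] → ℝ be a nonnegative, nondecreasing, absolutely continuous function whose derivative A' is nondecreasing on (0, 1). If there exist constants C > 0 and α ∈ (0, 1) such that A(1) − A(s) ∼ C·(1−s)^α as s ↑ 1, then A'(s) ∼ C·α·(1−s)^{α−1} as s ↑ 1. -/
open Set Filter MeasureTheory

private lemma slope_rpow_aux (α : ℝ) :
    Tendsto (fun y : ℝ => (y ^ α - 1) / (y - 1)) (nhdsWithin 1 {(1:ℝ)}ᶜ) (nhds α) := by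
  have h : HasDerivAt (fun x : ℝ => x ^ α) (α * (1:ℝ) ^ (α - 1)) 1 :=
    Real.hasDerivAt_rpow_const (Or.inl one_ne_zero)
  have h2 := hasDerivAt_iff_tendsto_slope.mp h
  rw [Real.one_rpow, mul_one] at h2
  have hs : slope (fun x : ℝ => x ^ α) 1 = fun y : ℝ => (y ^ α - 1) / (y - 1) := by
    funext y
    rw [slope_def_field, Real.one_rpow]
  rwa [hs] at h2

private lemma tendsto_low_aux {α : ℝ} (hα0 : 0 < α) :
    Tendsto (fun δ : ℝ => ((1 + δ) ^ α - 1) / (α * δ)) (nhdsWithin 0 (Ioi 0)) (nhds 1) := by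
  have hmap : Tendsto (fun δ : ℝ => 1 + δ) (nhdsWithin 0 (Ioi 0))
      (nhdsWithin 1 {(1:ℝ)}ᶜ) := by
    rw [tendsto_nhdsWithin_iff]
    constructor
    · have hc : Continuous fun δ : ℝ => 1 + δ := by continuity
      exact (hc.tendsto' 0 1 (by ring)).mono_left nhdsWithin_le_nhds
    · filter_upwards [eventually_mem_nhdsWithin] with δ hδ
      have hδ' : (0:ℝ) < δ := hδ
      simp only [mem_compl_iff, mem_singleton_iff]
      intro h
      linarith [h]
  have h := ((slope_rpow_aux α).comp hmap).div_const α
  have heq : (fun δ : ℝ => ((fun y : ℝ => (y ^ α - 1) / (y - 1)) ∘ fun δ : ℝ => 1 + δ) δ / α)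
      = fun δ : ℝ => ((1 + δ) ^ α - 1) / (α * δ) := by
    funext δ
    simp only [Function.comp_apply]
    rw [div_div, show (1:ℝ) + δ - 1 = δ by ring, mul_comm δ α]
  rw [heq, div_self hα0.ne'] at h
  exact h

private lemma tendsto_up_aux {α : ℝ} (hα0 : 0 < α) :
    Tendsto (fun δ : ℝ => (1 - (1 - δ) ^ α) / (α * δ)) (nhdsWithin 0 (Ioi 0)) (nhds 1) := by
  have hmap : Tendsto (fun δ : ℝ => 1 - δ) (nhdsWithin 0 (Ioi 0))
      (nhdsWithin 1 {(1:ℝ)}ᶜ) := by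
    rw [tendsto_nhdsWithin_iff]
    constructor
    · have hc : Continuous fun δ : ℝ => 1 - δ := by continuity
      exact (hc.tendsto' 0 1 (by ring)).mono_left nhdsWithin_le_nhds
    · filter_upwards [eventually_mem_nhdsWithin] with δ hδ
      have hδ' : (0:ℝ) < δ := hδ
      simp only [mem_compl_iff, mem_singleton_iff]
      intro h
      linarith [h]
  have h := ((slope_rpow_aux α).comp hmap).div_const α
  have heq : (fun δ : ℝ => ((fun y : ℝ => (y ^ α - 1) / (y - 1)) ∘ fun δ : ℝ => 1 - δ) δ / α)
      = fun δ : ℝ => (1 - (1 - δ) ^ α) / (α * δ) := by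
    funext δ
    simp only [Function.comp_apply]
    rw [div_div, show (1:ℝ) - δ - 1 = -δ by ring,
      show (-δ) * α = -(α * δ) by ring,
      show ((1:ℝ) - δ) ^ α - 1 = -(1 - (1 - δ) ^ α) by ring, neg_div_neg_eq]
  rw [heq, div_self hα0.ne'] at h
  exact h

/-- Elementary Tauberian lemma: if `A : [0,1] → ℝ` is nonnegative, nondecreasing, and
absolutely continuous with nondecreasing derivative `A'` on `(0,1)`, and
`A(1) − A(s) ∼ C (1−s)^α` as `s ↑ 1` with `C > 0`, `α ∈ (0,1)`, then
`A'(s) ∼ C α (1−s)^{α−1}` as `s ↑ 1`. -/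
theorem derivative_singular_behavior
    (A A' : ℝ → ℝ) (C α : ℝ) (hC : 0 < C) (hα : α ∈ Ioo (0:ℝ) 1)
    (hnonneg : ∀ s ∈ Icc (0:ℝ) 1, 0 ≤ A s)
    (hmono : MonotoneOn A (Icc (0:ℝ) 1))
    (hint : IntervalIntegrable A' volume 0 1)
    (hFTC : ∀ s ∈ Icc (0:ℝ) 1, A s - A 0 = ∫ t in (0:ℝ)..s, A' t)
    (hmono' : MonotoneOn A' (Ioo (0:ℝ) 1))
    (hsing : Tendsto (fun s : ℝ => (A 1 - A s) / (C * (1 - s) ^ α))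
      (nhdsWithin 1 (Iio 1)) (nhds 1)) :
    Tendsto (fun s : ℝ => A' s / (C * α * (1 - s) ^ (α - 1)))
      (nhdsWithin 1 (Iio 1)) (nhds 1) := by
  obtain ⟨hα0, hα1⟩ := hα
  set g : ℝ → ℝ := fun s => (A 1 - A s) / (C * (1 - s) ^ α) with hgdef
  have hpow : ∀ x : ℝ, x < 1 → C * (1 - x) ^ α * g x = A 1 - A x := by
    intro x hx
    have h1 : (0:ℝ) < (1 - x) ^ α := Real.rpow_pos_of_pos (by linarith) α
    rw [hgdef]
    field_simp
  have hsubset : ∀ x ∈ Icc (0:ℝ) 1, uIcc (0:ℝ) x ⊆ uIcc (0:ℝ) 1 := by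
    intro x hx
    rw [uIcc_of_le hx.1, uIcc_of_le zero_le_one]
    exact Icc_subset_Icc le_rfl hx.2
  have hFTC2 : ∀ a b : ℝ, a ∈ Icc (0:ℝ) 1 → b ∈ Icc (0:ℝ) 1 →
      A b - A a = ∫ t in a..b, A' t := by
    intro a b ha hb
    have h1 := hFTC a ha
    have h2 := hFTC b hb
    have h3 := intervalIntegral.integral_interval_sub_left
      (hint.mono_set (hsubset b hb)) (hint.mono_set (hsubset a ha))
    linarith
  -- lower FTC bound : (b - a) * A' a ≤ A b - A a
  have keyLow : ∀ a b : ℝ, 0 < a → a ≤ b → b < 1 →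
      (b - a) * A' a ≤ A b - A a := by
    intro a b ha hab hb
    have haI : a ∈ Icc (0:ℝ) 1 := ⟨ha.le, by linarith⟩
    have hbI : b ∈ Icc (0:ℝ) 1 := ⟨by linarith, hb.le⟩
    have hInt : IntervalIntegrable A' volume a b := by
      apply hint.mono_set
      rw [uIcc_of_le hab, uIcc_of_le zero_le_one]
      exact Icc_subset_Icc haI.1 hbI.2
    rw [hFTC2 a b haI hbI]
    calc (b - a) * A' a = ∫ _ in a..b, A' a := by
          rw [intervalIntegral.integral_const, smul_eq_mul]
      _ ≤ ∫ t in a..b, A' t := by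
          apply intervalIntegral.integral_mono_on hab intervalIntegrable_const hInt
          intro x hx
          exact hmono' ⟨ha, lt_of_le_of_lt hab hb⟩
            ⟨lt_of_lt_of_le ha hx.1, lt_of_le_of_lt hx.2 hb⟩ hx.1
  -- upper FTC bound : A b - A a ≤ (b - a) * A' b
  have keyHigh : ∀ a b : ℝ, 0 < a → a ≤ b → b < 1 →
      A b - A a ≤ (b - a) * A' b := by
    intro a b ha hab hb
    have haI : a ∈ Icc (0:ℝ) 1 := ⟨ha.le, by linarith⟩
    have hbI : b ∈ Icc (0:ℝ) 1 := ⟨by linarith, hb.le⟩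
    have hInt : IntervalIntegrable A' volume a b := by
      apply hint.mono_set
      rw [uIcc_of_le hab, uIcc_of_le zero_le_one]
      exact Icc_subset_Icc haI.1 hbI.2
    rw [hFTC2 a b haI hbI]
    calc (∫ t in a..b, A' t) ≤ ∫ _ in a..b, A' b := by
          apply intervalIntegral.integral_mono_on hab hInt intervalIntegrable_const
          intro x hx
          exact hmono' ⟨lt_of_lt_of_le ha hx.1, lt_of_le_of_lt hx.2 hb⟩
            ⟨lt_of_lt_of_le ha hab, hb⟩ hx.2
      _ = (b - a) * A' b := by rw [intervalIntegral.integral_const, smul_eq_mul]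
  have Dpos : ∀ s : ℝ, s < 1 → 0 < C * α * (1 - s) ^ (α - 1) := by
    intro s hs
    have h1 : (0:ℝ) < (1 - s) ^ (α - 1) :=
      Real.rpow_pos_of_pos (by linarith) (α - 1)
    positivity
  -- upper estimate for the ratio
  have upperIneq : ∀ δ : ℝ, 0 < δ → δ < 1 → ∀ s : ℝ, 0 < s → s < 1 →
      A' s / (C * α * (1 - s) ^ (α - 1)) ≤
        (g s - (1 - δ) ^ α * g (s + δ * (1 - s))) / (α * δ) := by
    intro δ hδ0 hδ1 s hs0 hs1
    have hr : (0:ℝ) < 1 - s := by linarith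
    set b := s + δ * (1 - s) with hbdef
    have hsb : s ≤ b := by nlinarith
    have hb1 : b < 1 := by nlinarith
    have hkey := keyLow s b hs0 hsb hb1
    have h1b : 1 - b = (1 - δ) * (1 - s) := by rw [hbdef]; ring
    have hAb : A b - A s =
        C * (1 - s) ^ α * g s - C * ((1 - δ) ^ α * (1 - s) ^ α) * g b := by
      rw [← Real.mul_rpow (by linarith) (by linarith), ← h1b,
        hpow b hb1, hpow s hs1]
      ring
    have hbs : b - s = δ * (1 - s) := by rw [hbdef]; ring
    rw [hbs, hAb] at hkey
    have h5 : A' s ≤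
        (C * (1 - s) ^ α * g s - C * ((1 - δ) ^ α * (1 - s) ^ α) * g b) /
          (δ * (1 - s)) := by
      rw [le_div_iff₀ (by positivity)]
      calc A' s * (δ * (1 - s)) = δ * (1 - s) * A' s := by ring
        _ ≤ _ := hkey
    have hD := Dpos s hs1
    rw [div_le_div_iff₀ hD (by positivity)]
    calc A' s * (α * δ)
        ≤ ((C * (1 - s) ^ α * g s - C * ((1 - δ) ^ α * (1 - s) ^ α) * g b) /
            (δ * (1 - s))) * (α * δ) :=
          mul_le_mul_of_nonneg_right h5 (by positivity)
      _ = (g s - (1 - δ) ^ α * g b) * (C * α * (1 - s) ^ (α - 1)) := by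
          rw [show (1 - s : ℝ) ^ (α - 1) = (1 - s) ^ α / (1 - s) by
            rw [Real.rpow_sub hr, Real.rpow_one]]
          field_simp
  -- lower estimate for the ratio
  have lowerIneq : ∀ δ : ℝ, 0 < δ → ∀ s : ℝ, 1 - 1 / (1 + δ) < s → s < 1 →
      ((1 + δ) ^ α * g (s - δ * (1 - s)) - g s) / (α * δ) ≤
        A' s / (C * α * (1 - s) ^ (α - 1)) := by
    intro δ hδ0 s hsl hs1
    have hr : (0:ℝ) < 1 - s := by linarith
    have h1δ : (0:ℝ) < 1 + δ := by linarith
    set a := s - δ * (1 - s) with hadef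
    have ha0 : 0 < a := by
      rw [hadef]
      have : (1 + δ) * (1 - s) < 1 := by
        have h2 : 1 - s < 1 / (1 + δ) := by linarith
        calc (1 + δ) * (1 - s) < (1 + δ) * (1 / (1 + δ)) := by
              exact mul_lt_mul_of_pos_left h2 h1δ
          _ = 1 := by field_simp
      nlinarith
    have has : a ≤ s := by rw [hadef]; nlinarith
    have hkey := keyHigh a s ha0 has hs1
    have h1a : 1 - a = (1 + δ) * (1 - s) := by rw [hadef]; ring
    have hAa : A s - A a =
        C * ((1 + δ) ^ α * (1 - s) ^ α) * g a - C * (1 - s) ^ α * g s := by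
      rw [← Real.mul_rpow (by linarith) (by linarith), ← h1a,
        hpow a (by linarith), hpow s hs1]
      ring
    have hsa : s - a = δ * (1 - s) := by rw [hadef]; ring
    rw [hsa, hAa] at hkey
    have h5 : (C * ((1 + δ) ^ α * (1 - s) ^ α) * g a - C * (1 - s) ^ α * g s) /
        (δ * (1 - s)) ≤ A' s := by
      rw [div_le_iff₀ (by positivity)]
      calc C * ((1 + δ) ^ α * (1 - s) ^ α) * g a - C * (1 - s) ^ α * g s
          ≤ δ * (1 - s) * A' s := hkey
        _ = A' s * (δ * (1 - s)) := by ring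
    have hD := Dpos s hs1
    rw [div_le_div_iff₀ (by positivity) hD]
    calc ((1 + δ) ^ α * g a - g s) * (C * α * (1 - s) ^ (α - 1))
        = ((C * ((1 + δ) ^ α * (1 - s) ^ α) * g a - C * (1 - s) ^ α * g s) /
            (δ * (1 - s))) * (α * δ) := by
          rw [show (1 - s : ℝ) ^ (α - 1) = (1 - s) ^ α / (1 - s) by
            rw [Real.rpow_sub hr, Real.rpow_one]]
          field_simp
      _ ≤ A' s * (α * δ) := mul_le_mul_of_nonneg_right h5 (by positivity)
  -- assemble via tendsto_order
  rw [tendsto_order]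
  constructor
  · -- lower: for l < 1, eventually l < ratio
    intro l hl
    have hlow := tendsto_low_aux (α := α) hα0
    have hmem : Ioo (0:ℝ) 1 ∈ nhdsWithin (0:ℝ) (Ioi 0) :=
      Ioo_mem_nhdsGT_of_mem (left_mem_Ico.2 one_pos)
    obtain ⟨δ, hδl, hδ0, hδ1⟩ :=
      ((hlow.eventually (eventually_gt_nhds hl)).and hmem).exists
    have h1δ : (0:ℝ) < 1 + δ := by linarith
    set φ : ℝ → ℝ := fun s => s - δ * (1 - s) with hφdef
    have hφ : Tendsto φ (nhdsWithin 1 (Iio 1)) (nhdsWithin 1 (Iio 1)) := by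
      rw [tendsto_nhdsWithin_iff]
      constructor
      · have hc : Continuous φ := by
          rw [hφdef]
          exact continuous_id.sub (continuous_const.mul (continuous_const.sub continuous_id))
        exact (hc.tendsto' 1 1 (by rw [hφdef]; simp)).mono_left nhdsWithin_le_nhds
      · filter_upwards [eventually_mem_nhdsWithin] with s hs
        have hs' : s < 1 := hs
        show φ s ∈ Iio (1:ℝ)
        rw [hφdef]
        simp only [mem_Iio]
        nlinarith
    have hL : Tendsto (fun s : ℝ => ((1 + δ) ^ α * g (φ s) - g s) / (α * δ))
        (nhdsWithin 1 (Iio 1)) (nhds (((1 + δ) ^ α * 1 - 1) / (α * δ))) :=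
      ((tendsto_const_nhds.mul (hsing.comp hφ)).sub hsing).div_const (α * δ)
    rw [mul_one] at hL
    have hev1 := hL.eventually (eventually_gt_nhds hδl)
    have hev2 : Ioo (1 - 1 / (1 + δ)) 1 ∈ nhdsWithin (1:ℝ) (Iio 1) := by
      apply Ioo_mem_nhdsLT_of_mem
      constructor
      · have : (0:ℝ) < 1 / (1 + δ) := by positivity
        linarith
      · exact le_rfl
    filter_upwards [hev1, eventually_mem_nhdsWithin, hev2] with s h1 h2 h3
    have hs1 : s < 1 := h2
    exact lt_of_lt_of_le h1 (lowerIneq δ hδ0 s h3.1 hs1)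
  · -- upper: for u > 1, eventually ratio < u
    intro u hu
    have hup := tendsto_up_aux (α := α) hα0
    have hmem : Ioo (0:ℝ) 1 ∈ nhdsWithin (0:ℝ) (Ioi 0) :=
      Ioo_mem_nhdsGT_of_mem (left_mem_Ico.2 one_pos)
    obtain ⟨δ, hδu, hδ0, hδ1⟩ :=
      ((hup.eventually (eventually_lt_nhds hu)).and hmem).exists
    set φ : ℝ → ℝ := fun s => s + δ * (1 - s) with hφdef
    have hφ : Tendsto φ (nhdsWithin 1 (Iio 1)) (nhdsWithin 1 (Iio 1)) := by
      rw [tendsto_nhdsWithin_iff]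
      constructor
      · have hc : Continuous φ := by
          rw [hφdef]
          exact continuous_id.add (continuous_const.mul (continuous_const.sub continuous_id))
        exact (hc.tendsto' 1 1 (by rw [hφdef]; simp)).mono_left nhdsWithin_le_nhds
      · filter_upwards [eventually_mem_nhdsWithin] with s hs
        have hs' : s < 1 := hs
        show φ s ∈ Iio (1:ℝ)
        rw [hφdef]
        simp only [mem_Iio]
        nlinarith
    have hU : Tendsto (fun s : ℝ => (g s - (1 - δ) ^ α * g (φ s)) / (α * δ))
        (nhdsWithin 1 (Iio 1)) (nhds ((1 - (1 - δ) ^ α * 1) / (α * δ))) :=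
      (hsing.sub (tendsto_const_nhds.mul (hsing.comp hφ))).div_const (α * δ)
    rw [mul_one] at hU
    have hev1 := hU.eventually (eventually_lt_nhds hδu)
    have hev2 : Ioo (0:ℝ) 1 ∈ nhdsWithin (1:ℝ) (Iio 1) :=
      Ioo_mem_nhdsLT_of_mem ⟨one_pos, le_rfl⟩
    filter_upwards [hev1, hev2] with s h1 h2
    exact lt_of_le_of_lt (upperIneq δ hδ0 hδ1 s h2.1 h2.2) h1
end

section
/- The series Σ over all pairs of integers (m, n) ≠ (0, 0) of (m + n·e^{iπ/3})⁻⁶ converges absolutely, and its value is a real number that is strictly positive. -/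
/-!
On the square of sup-radius `k` (which has `8k` lattice points for `k ≥ 1`) one has
`|m + nξ|² = m² + mn + n² ≥ 3k²/4`, so `Σ |m + nξ|⁻⁶ ≤ 8 + 64/27 < 12`. Complex conjugation
permutes the lattice, so the sum `S` is real. Every term `t` satisfies `Re t + |t| ≥ 0`, and the six
units `±1, ±ξ, ±ξ²` give `t = 1`; hence `Re S ≥ 2 · 6 - Σ |t| > 0`.
-/

open Finset ComplexConjugate

lemma Int.exists_sum_le_sum_range_box {g : ℤ × ℤ → ℝ} (hg : 0 ≤ g) (s : Finset (ℤ × ℤ)) :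
    ∃ n, ∑ p ∈ s, g p ≤ ∑ k ∈ Finset.range n, ∑ p ∈ box k, g p := by
  let radius : ℤ × ℤ → ℕ := fun p => max p.1.natAbs p.2.natAbs
  refine ⟨s.sup radius + 1, ?_⟩
  rw [← sum_biUnion]
  · refine sum_le_sum_of_subset_of_nonneg (fun p hp => mem_biUnion.mpr ⟨radius p, ?_, ?_⟩)
      fun p _ _ => hg p
    · exact mem_range.mpr (Nat.lt_succ_of_le (le_sup hp))
    · exact Int.mem_box.mpr rfl
  · intro a _ b _ hab
    exact disjoint_left.mpr fun p hpa hpb =>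
      hab ((Int.mem_box.mp hpa).symm.trans (Int.mem_box.mp hpb))

lemma Complex.two_mul_card_sub_tsum_norm_le_re_tsum {α : Type*} {f : α → ℂ}
    (hf : Summable fun x => ‖f x‖) (F : Finset α) (hF : ∀ x ∈ F, f x = 1) :
    2 * #F - ∑' x, ‖f x‖ ≤ (∑' x, f x).re := by
  have hre : Summable fun x => (f x).re := Complex.reCLM.summable hf.of_norm
  have hF2 : ∑ x ∈ F, ((f x).re + ‖f x‖) = 2 * #F := by
    rw [sum_congr rfl fun x hx => by rw [hF x hx], sum_const, nsmul_eq_mul]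
    norm_num [mul_comm]
  have hF_le := (hre.add hf).sum_le_tsum F fun x _ => by
    linarith [neg_abs_le (f x).re, Complex.abs_re_le_norm (f x)]
  rw [hF2, hre.tsum_add hf] at hF_le
  rw [Complex.re_tsum hf.of_norm]
  linarith

namespace HexagonalLattice

noncomputable def ξ : ℂ := Complex.exp ((Real.pi : ℂ) * Complex.I / 3)

noncomputable def point (p : ℤ × ℤ) : ℂ := p.1 + p.2 * ξ

def normForm (p : ℤ × ℤ) : ℤ := p.1 ^ 2 + p.1 * p.2 + p.2 ^ 2

lemma ξ_eq : ξ = ⟨1 / 2, √3 / 2⟩ := by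
  have h : (Real.pi : ℂ) * Complex.I / 3 = ((Real.pi / 3 : ℝ) : ℂ) * Complex.I := by
    push_cast; ring
  rw [ξ, h, Complex.exp_mul_I, ← Complex.ofReal_cos, ← Complex.ofReal_sin,
    Real.cos_pi_div_three, Real.sin_pi_div_three]
  apply Complex.ext <;> simp

lemma ξ_sq : ξ ^ 2 = ξ - 1 := by
  have h3 : √3 ^ 2 = 3 := Real.sq_sqrt (by norm_num)
  rw [ξ_eq]
  apply Complex.ext <;> simp [pow_two] <;> nlinarith

lemma conj_ξ : conj ξ = 1 - ξ := by
  rw [ξ_eq]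
  apply Complex.ext <;> norm_num

lemma normSq_point (p : ℤ × ℤ) : Complex.normSq (point p) = normForm p := by
  have h3 : √3 ^ 2 = 3 := Real.sq_sqrt (by norm_num)
  simp only [point, ξ_eq, Complex.normSq_apply, normForm, Complex.add_re, Complex.add_im,
    Complex.mul_re, Complex.mul_im, Complex.intCast_re, Complex.intCast_im]
  push_cast
  nlinarith

lemma norm_inv_point_pow_six (p : ℤ × ℤ) :
    ‖(point p ^ 6)⁻¹‖ = ((normForm p : ℝ) ^ 3)⁻¹ := by
  rw [norm_inv, norm_pow, ← normSq_point, ← Complex.sq_norm, ← pow_mul]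

lemma one_le_normForm {p : ℤ × ℤ} (hp : p ≠ 0) : 1 ≤ normForm p := by
  obtain ⟨m, n⟩ := p
  unfold normForm
  by_cases hn : n = 0
  · have hm : m ≠ 0 := by rintro rfl; exact hp (by rw [hn]; rfl)
    nlinarith [sq_pos_of_ne_zero hm, sq_nonneg (m + 2 * n)]
  · nlinarith [sq_pos_of_ne_zero hn, sq_nonneg (2 * m + n)]

lemma three_mul_sq_le_four_mul_normForm {p : ℤ × ℤ} {k : ℕ} (hp : p ∈ box k) :
    3 * (k : ℤ) ^ 2 ≤ 4 * normForm p := by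
  rw [Int.mem_box] at hp
  subst hp
  unfold normForm
  rcases le_total p.1.natAbs p.2.natAbs with h | h
  · rw [max_eq_right h, Int.natAbs_sq]; nlinarith [sq_nonneg (2 * p.1 + p.2)]
  · rw [max_eq_left h, Int.natAbs_sq]; nlinarith [sq_nonneg (p.1 + 2 * p.2)]

lemma inv_normForm_pow_three_le {p : ℤ × ℤ} {k : ℕ} (hk : 2 ≤ k) (hp : p ∈ box k) :
    ((normForm p : ℝ) ^ 3)⁻¹ ≤ ((3 * k / 2 : ℝ) ^ 3)⁻¹ := by
  have hsq : 3 * (k : ℝ) ^ 2 ≤ 4 * normForm p := mod_cast three_mul_sq_le_four_mul_normForm hp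
  have hk' : (2 : ℝ) ≤ k := mod_cast hk
  have hlin : 3 * (k : ℝ) / 2 ≤ normForm p := by nlinarith
  exact inv_anti₀ (by positivity) (pow_le_pow_left₀ (by positivity) hlin 3)

lemma sum_box_one_le : ∑ p ∈ box 1, ‖(point p ^ 6)⁻¹‖ ≤ 8 := by
  have := sum_le_card_nsmul (box 1 : Finset (ℤ × ℤ)) (fun p => ‖(point p ^ 6)⁻¹‖) 1 fun p hp => by
    have h0 : p ≠ 0 := by rintro rfl; simp at hp
    have h1 : (1 : ℝ) ≤ normForm p := mod_cast one_le_normForm h0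
    rw [norm_inv_point_pow_six]
    exact inv_le_one_of_one_le₀ (one_le_pow₀ h1)
  simpa [Int.card_box] using this

lemma sum_box_le {k : ℕ} (hk : 2 ≤ k) :
    ∑ p ∈ box k, ‖(point p ^ 6)⁻¹‖ ≤ 64 / 27 * ((k : ℝ) ^ 2)⁻¹ := by
  have := sum_le_card_nsmul (box k : Finset (ℤ × ℤ)) (fun p => ‖(point p ^ 6)⁻¹‖) _ fun p hp => by
    rw [norm_inv_point_pow_six]
    exact inv_normForm_pow_three_le hk hp
  rw [Int.card_box (by omega), nsmul_eq_mul] at this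
  have hk0 : (k : ℝ) ≠ 0 := by positivity
  refine this.trans_eq ?_
  push_cast
  field_simp
  ring

lemma sum_norm_le (s : Finset (ℤ × ℤ)) : ∑ p ∈ s, ‖(point p ^ 6)⁻¹‖ ≤ 8 + 64 / 27 := by
  obtain ⟨n, hn⟩ := Int.exists_sum_le_sum_range_box (fun p => norm_nonneg (point p ^ 6)⁻¹) s
  have hrange : Finset.range n ⊆ insert 0 (insert 1 (Ioo 1 n)) := fun k hk => by
    simp only [mem_insert, mem_Ioo]; simp only [mem_range] at hk; omega
  have hbox_zero : ∑ p ∈ box 0, ‖(point p ^ 6)⁻¹‖ = 0 := by simp [point]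
  have htail : ∑ k ∈ Ioo 1 n, ∑ p ∈ box k, ‖(point p ^ 6)⁻¹‖ ≤ 64 / 27 := by
    calc ∑ k ∈ Ioo 1 n, ∑ p ∈ box k, ‖(point p ^ 6)⁻¹‖
        ≤ ∑ k ∈ Ioo 1 n, 64 / 27 * ((k : ℝ) ^ 2)⁻¹ :=
          sum_le_sum fun k hk => sum_box_le (mem_Ioo.mp hk).1
      _ ≤ 64 / 27 * 1 := by
          rw [← mul_sum]
          have := sum_Ioo_inv_sq_le (α := ℝ) 1 n
          norm_num at this
          gcongr
      _ = 64 / 27 := mul_one _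
  calc ∑ p ∈ s, ‖(point p ^ 6)⁻¹‖
      ≤ ∑ k ∈ Finset.range n, ∑ p ∈ box k, ‖(point p ^ 6)⁻¹‖ := hn
    _ ≤ ∑ k ∈ insert 0 (insert 1 (Ioo 1 n)), ∑ p ∈ box k, ‖(point p ^ 6)⁻¹‖ :=
        sum_le_sum_of_subset_of_nonneg hrange fun k _ _ => sum_nonneg fun p _ => norm_nonneg _
    _ ≤ 8 + 64 / 27 := by
        rw [sum_insert (by simp), sum_insert (by simp), hbox_zero]
        linarith [sum_box_one_le]

lemma summable_norm_inv_point_pow_six : Summable fun p => ‖(point p ^ 6)⁻¹‖ :=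
  summable_of_sum_le (fun _ => norm_nonneg _) sum_norm_le

def conjEquiv : ℤ × ℤ ≃ ℤ × ℤ where
  toFun p := (p.1 + p.2, -p.2)
  invFun p := (p.1 + p.2, -p.2)
  left_inv _ := by simp
  right_inv _ := by simp

lemma conj_point (p : ℤ × ℤ) : conj (point p) = point (conjEquiv p) := by
  simp only [point, conjEquiv, Equiv.coe_fn_mk, map_add, map_mul, map_intCast, conj_ξ]
  push_cast
  ring

lemma conj_tsum_inv_point_pow_six :
    conj (∑' p, (point p ^ 6)⁻¹) = ∑' p, (point p ^ 6)⁻¹ := by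
  simp only [Complex.conj_tsum, map_inv₀, map_pow, conj_point]
  exact conjEquiv.tsum_eq fun p => (point p ^ 6)⁻¹

/-- The units `1, ξ, ξ², -1, -ξ, -ξ²` of `ℤ[ξ]`, using `ξ² = ξ - 1`. -/
def units : Finset (ℤ × ℤ) := {(1, 0), (0, 1), (-1, 1), (-1, 0), (0, -1), (1, -1)}

lemma point_pow_six_of_mem_units {p : ℤ × ℤ} (hp : p ∈ units) : point p ^ 6 = 1 := by
  have hξ : ξ ^ 6 = 1 := by linear_combination (ξ ^ 4 + ξ ^ 3 - ξ - 1) * ξ_sq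
  have hξ' : (ξ - 1) ^ 6 = 1 := by rw [← ξ_sq, ← pow_mul, pow_mul', hξ, one_pow]
  simp only [units, mem_insert, mem_singleton] at hp
  rcases hp with rfl | rfl | rfl | rfl | rfl | rfl <;> simp only [point] <;> push_cast <;>
    first | linear_combination hξ | linear_combination hξ' | linear_combination

lemma re_tsum_inv_point_pow_six_pos : 0 < (∑' p, (point p ^ 6)⁻¹).re := by
  have hunits := Complex.two_mul_card_sub_tsum_norm_le_re_tsum
    summable_norm_inv_point_pow_six units fun p hp => by rw [point_pow_six_of_mem_units hp, inv_one]
  have hnorm : ∑' p, ‖(point p ^ 6)⁻¹‖ ≤ 8 + 64 / 27 :=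
    Real.tsum_le_of_sum_le (fun _ => norm_nonneg _) sum_norm_le
  rw [show #units = 6 from rfl] at hunits
  linarith

end HexagonalLattice

/-- The Eisenstein-type series `Σ_{(m,n) ≠ (0,0)} (m + n e^{iπ/3})⁻⁶` converges absolutely
and its value is a strictly positive real number. -/
theorem eisenstein_hexagonal_positive :
    Summable (fun p : {p : ℤ × ℤ // p ≠ (0, 0)} =>
      ‖(((p.val.1 : ℂ) + (p.val.2 : ℂ) * Complex.exp ((Real.pi : ℂ) * Complex.I / 3)) ^ 6)⁻¹‖) ∧
    ∃ r : ℝ, 0 < r ∧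
      (∑' p : {p : ℤ × ℤ // p ≠ (0, 0)},
        (((p.val.1 : ℂ) + (p.val.2 : ℂ) * Complex.exp ((Real.pi : ℂ) * Complex.I / 3)) ^ 6)⁻¹)
        = (r : ℂ) := by
  refine ⟨HexagonalLattice.summable_norm_inv_point_pow_six.subtype _, _,
    HexagonalLattice.re_tsum_inv_point_pow_six_pos, ?_⟩
  -- `(0 ^ 6)⁻¹ = 0`, so the sum may as well run over all of `ℤ × ℤ`.
  have hsupport : Function.support (fun p => (HexagonalLattice.point p ^ 6)⁻¹) ⊆
      {p | p ≠ (0, 0)} := by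
    intro p hp h0
    simp [h0, HexagonalLattice.point] at hp
  exact (tsum_subtype_eq_of_support_subset hsupport).trans
    (Complex.conj_eq_iff_re.mp HexagonalLattice.conj_tsum_inv_point_pow_six).symm
end
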